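/- Let ε = 1 or ε = −1 and let b₀, b₁, c₁, c₂ : ℝ → ℝ be smooth. For smooth η : ℝ → ℝ define the vector field Y(η) on ℝ⁴ by Y(η)(x,y,t,u) = ( (ε/2)y(b₁(t)η(t) − η′(t)), η(t), 0, [−2c₂(t)η(t) + (ε/2)(−η″(t) + b₁′(t)η(t) + b₁(t)²η(t))]y − c₁(t)η(t) + (ε/2)b₀(t)(b₁(t)η(t) − η′(t)) ), and for smooth ξ : ℝ → ℝ define X(ξ)(x,y,t,u) = (ξ(t), 0, 0, ξ′(t)). Then for any smooth η₁, η₂ : ℝ → ℝ the Lie bracket satisfies [Y(η₁), Y(η₂)] = X(ξ) with ξ(t) = −(ε/2)(η₁(t)η₂′(t) − η₁′(t)η₂(t)). -/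

import Mathlib

open ContinuousLinearMap

/-- The vector field `X(ξ) = ξ(t)∂_x + ξ′(t)∂_u` on ℝ⁴ with coordinates `(x, y, t, u)`. -/
noncomputable def X (ξ : ℝ → ℝ) (p : ℝ × ℝ × ℝ × ℝ) : ℝ × ℝ × ℝ × ℝ :=
  (ξ p.2.2.1, 0, 0, deriv ξ p.2.2.1)

/-- The Kac–Moody generator `Y(η)` of equation (5.10), as a vector field on ℝ⁴
with coordinates `(x, y, t, u)`. -/
noncomputable def Y (ε : ℝ) (b₀ b₁ c₁ c₂ : ℝ → ℝ) (η : ℝ → ℝ)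
    (p : ℝ × ℝ × ℝ × ℝ) : ℝ × ℝ × ℝ × ℝ :=
  (ε / 2 * p.2.1 * (b₁ p.2.2.1 * η p.2.2.1 - deriv η p.2.2.1),
   η p.2.2.1,
   0,
   (-2 * c₂ p.2.2.1 * η p.2.2.1
      + ε / 2 * (-(deriv (deriv η) p.2.2.1) + deriv b₁ p.2.2.1 * η p.2.2.1
        + (b₁ p.2.2.1) ^ 2 * η p.2.2.1)) * p.2.1
     - c₁ p.2.2.1 * η p.2.2.1
     + ε / 2 * b₀ p.2.2.1 * (b₁ p.2.2.1 * η p.2.2.1 - deriv η p.2.2.1))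

abbrev E4 : Type := ℝ × ℝ × ℝ × ℝ

noncomputable def py : E4 →L[ℝ] ℝ :=
  (fst ℝ ℝ (ℝ × ℝ)).comp (snd ℝ ℝ (ℝ × ℝ × ℝ))

noncomputable def pt : E4 →L[ℝ] ℝ :=
  (fst ℝ ℝ ℝ).comp ((snd ℝ ℝ (ℝ × ℝ)).comp (snd ℝ ℝ (ℝ × ℝ × ℝ)))

@[simp] lemma py_apply (v : E4) : py v = v.2.1 := rfl
@[simp] lemma pt_apply (v : E4) : pt v = v.2.2.1 := rfl

lemma hasFDerivAt_py (p : E4) : HasFDerivAt (fun q : E4 => q.2.1) py p :=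
  hasFDerivAt_fst.comp p hasFDerivAt_snd

lemma hasFDerivAt_pt (p : E4) : HasFDerivAt (fun q : E4 => q.2.2.1) pt p :=
  hasFDerivAt_fst.comp p (hasFDerivAt_snd.comp p hasFDerivAt_snd)

lemma hasFDerivAt_comp_t {f : ℝ → ℝ} (hf : Differentiable ℝ f) (p : E4) :
    HasFDerivAt (fun q : E4 => f q.2.2.1) (deriv f p.2.2.1 • pt) p :=
  ((hf p.2.2.1).hasDerivAt).comp_hasFDerivAt p (hasFDerivAt_pt p)

lemma key (ε : ℝ) {g A B η : ℝ → ℝ} (hg : Differentiable ℝ g)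
    (hA : Differentiable ℝ A) (hB : Differentiable ℝ B) (hη : Differentiable ℝ η)
    (p v : E4) (hv : v.2.2.1 = 0) :
    fderiv ℝ (fun q : E4 =>
      ((ε / 2 * q.2.1 * g q.2.2.1, η q.2.2.1, 0, A q.2.2.1 * q.2.1 + B q.2.2.1) : E4)) p v
      = (ε / 2 * g p.2.2.1 * v.2.1, 0, 0, A p.2.2.1 * v.2.1) := by
  have h1 : HasFDerivAt (fun q : E4 => ε / 2 * q.2.1 * g q.2.2.1)
      ((ε / 2 * p.2.1) • (deriv g p.2.2.1 • pt) + g p.2.2.1 • ((ε/2) • py)) p :=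
    ((hasFDerivAt_py p).const_mul (ε/2)).mul (hasFDerivAt_comp_t hg p)
  have h2 := hasFDerivAt_comp_t hη p
  have h3 : HasFDerivAt (fun _ : E4 => (0:ℝ)) (0 : E4 →L[ℝ] ℝ) p := hasFDerivAt_const 0 p
  have h4 : HasFDerivAt (fun q : E4 => A q.2.2.1 * q.2.1 + B q.2.2.1)
      ((A p.2.2.1 • py + p.2.1 • (deriv A p.2.2.1 • pt)) + deriv B p.2.2.1 • pt) p :=
    ((hasFDerivAt_comp_t hA p).mul (hasFDerivAt_py p)).add (hasFDerivAt_comp_t hB p)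
  have H := (h1.prodMk (h2.prodMk (h3.prodMk h4))).fderiv
  rw [H]
  simp [hv]
  ring

/-- `[Y(η₁), Y(η₂)] = X(ξ)` with `ξ = −(ε/2)(η₁η₂′ − η₁′η₂)`. -/
theorem stmt3 (ε : ℝ) (hε : ε = 1 ∨ ε = -1)
    (b₀ b₁ c₁ c₂ : ℝ → ℝ) (hb₀ : ContDiff ℝ (⊤ : ℕ∞) b₀) (hb₁ : ContDiff ℝ (⊤ : ℕ∞) b₁)
    (hc₁ : ContDiff ℝ (⊤ : ℕ∞) c₁) (hc₂ : ContDiff ℝ (⊤ : ℕ∞) c₂)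
    (η₁ η₂ : ℝ → ℝ) (hη₁ : ContDiff ℝ (⊤ : ℕ∞) η₁) (hη₂ : ContDiff ℝ (⊤ : ℕ∞) η₂) :
    ∀ p : ℝ × ℝ × ℝ × ℝ,
      VectorField.lieBracket ℝ (Y ε b₀ b₁ c₁ c₂ η₁) (Y ε b₀ b₁ c₁ c₂ η₂) p
        = X (fun t => -(ε / 2) * (η₁ t * deriv η₂ t - deriv η₁ t * η₂ t)) p := by
  intro p
  -- differentiability facts
  have hd : ∀ {f : ℝ → ℝ}, ContDiff ℝ ((⊤ : ℕ∞) : WithTop ℕ∞) f → Differentiable ℝ f :=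
    fun hf => hf.differentiable (by simp)
  replace hη₁ : ContDiff ℝ ((⊤ : ℕ∞) : WithTop ℕ∞) η₁ := hη₁.of_le (by simp)
  replace hη₂ : ContDiff ℝ ((⊤ : ℕ∞) : WithTop ℕ∞) η₂ := hη₂.of_le (by simp)
  replace hb₀ : ContDiff ℝ ((⊤ : ℕ∞) : WithTop ℕ∞) b₀ := hb₀.of_le (by simp)
  replace hb₁ : ContDiff ℝ ((⊤ : ℕ∞) : WithTop ℕ∞) b₁ := hb₁.of_le (by simp)
  replace hc₁ : ContDiff ℝ ((⊤ : ℕ∞) : WithTop ℕ∞) c₁ := hc₁.of_le (by simp)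
  replace hc₂ : ContDiff ℝ ((⊤ : ℕ∞) : WithTop ℕ∞) c₂ := hc₂.of_le (by simp)
  have hη₁' : ContDiff ℝ ((⊤ : ℕ∞) : WithTop ℕ∞) (deriv η₁) := (contDiff_infty_iff_deriv.mp hη₁).2
  have hη₂' : ContDiff ℝ ((⊤ : ℕ∞) : WithTop ℕ∞) (deriv η₂) := (contDiff_infty_iff_deriv.mp hη₂).2
  have hη₁'' : ContDiff ℝ ((⊤ : ℕ∞) : WithTop ℕ∞) (deriv (deriv η₁)) := (contDiff_infty_iff_deriv.mp hη₁').2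
  have hη₂'' : ContDiff ℝ ((⊤ : ℕ∞) : WithTop ℕ∞) (deriv (deriv η₂)) := (contDiff_infty_iff_deriv.mp hη₂').2
  have hb₁' : ContDiff ℝ ((⊤ : ℕ∞) : WithTop ℕ∞) (deriv b₁) := (contDiff_infty_iff_deriv.mp hb₁).2
  have hgd : ∀ {η : ℝ → ℝ}, ContDiff ℝ ((⊤ : ℕ∞) : WithTop ℕ∞) η → ContDiff ℝ ((⊤ : ℕ∞) : WithTop ℕ∞) (deriv η) →
      Differentiable ℝ (fun s => b₁ s * η s - deriv η s) :=
    fun hη hη' => hd ((hb₁.mul hη).sub hη')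
  have hAd : ∀ {η : ℝ → ℝ}, ContDiff ℝ ((⊤ : ℕ∞) : WithTop ℕ∞) η → ContDiff ℝ ((⊤ : ℕ∞) : WithTop ℕ∞) (deriv (deriv η)) →
      Differentiable ℝ (fun s => -2 * c₂ s * η s
        + ε / 2 * (-(deriv (deriv η) s) + deriv b₁ s * η s + b₁ s ^ 2 * η s)) :=
    fun hη hη'' => hd (((contDiff_const.mul hc₂).mul hη).add
      (contDiff_const.mul ((hη''.neg.add (hb₁'.mul hη)).add ((hb₁.pow 2).mul hη))))
  have hBd : ∀ {η : ℝ → ℝ}, ContDiff ℝ ((⊤ : ℕ∞) : WithTop ℕ∞) η → ContDiff ℝ ((⊤ : ℕ∞) : WithTop ℕ∞) (deriv η) →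
      Differentiable ℝ (fun s => -(c₁ s * η s)
        + ε / 2 * b₀ s * (b₁ s * η s - deriv η s)) :=
    fun hη hη' => hd (((hc₁.mul hη).neg).add
      (((contDiff_const.mul hb₀)).mul ((hb₁.mul hη).sub hη')))
  -- rewrite Y in the canonical shape
  have hYe : ∀ η : ℝ → ℝ, Y ε b₀ b₁ c₁ c₂ η = fun q : E4 =>
      ((ε / 2 * q.2.1 * ((fun s => b₁ s * η s - deriv η s) q.2.2.1),
        η q.2.2.1, 0,
        ((fun s => -2 * c₂ s * η s + ε / 2 * (-(deriv (deriv η) s) + deriv b₁ s * η s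
            + b₁ s ^ 2 * η s)) q.2.2.1) * q.2.1
          + ((fun s => -(c₁ s * η s) + ε / 2 * b₀ s * (b₁ s * η s - deriv η s)) q.2.2.1)) : E4) := by
    intro η; funext q
    simp only [Y, Prod.mk.injEq]
    refine ⟨trivial, trivial, trivial, by ring⟩
  rw [VectorField.lieBracket, hYe η₁, hYe η₂,
    key ε (hgd hη₂ hη₂') (hAd hη₂ hη₂'') (hBd hη₂ hη₂') (hd hη₂) p _ rfl,
    key ε (hgd hη₁ hη₁') (hAd hη₁ hη₁'') (hBd hη₁ hη₁') (hd hη₁) p _ rfl]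
  set t := p.2.2.1
  have hX4 : deriv (fun s => -(ε / 2) * (η₁ s * deriv η₂ s - deriv η₁ s * η₂ s)) t
      = -(ε / 2) * ((deriv η₁ t * deriv η₂ t + η₁ t * deriv (deriv η₂) t)
        - (deriv (deriv η₁) t * η₂ t + deriv η₁ t * deriv η₂ t)) := by
    exact (((((hd hη₁ t).hasDerivAt.mul (hd hη₂' t).hasDerivAt)).sub
      (((hd hη₁' t).hasDerivAt.mul (hd hη₂ t).hasDerivAt))).const_mul (-(ε/2))).deriv
  simp only [X, show p.2.2.1 = t from rfl, hX4, Prod.sub_def, Prod.mk.injEq]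
  refine ⟨by ring, by ring, by ring, by ring⟩
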